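/- arXiv:2312.11403 — 4 statements merged into one kernel-verified Lean document; each statement's English description precedes it below -/
import Mathlib

section
/- Let Φ = ⋀_{i=1}^n (l₁^i ∨ l₂^i ∨ l₃^i) be a 3-CNF formula over variables x₁,…,xₘ, and let 𝒫 and 𝒩 be the sets of infinite words produced by the reduction. Then Φ is satisfiable if and only if there exists an LTL formula φ with Sz(φ) ≤ 2m − 1 that separates 𝒫 and 𝒩. -/
namespace Temporal

/-- LTL formulas over a set of atomic propositions `P`. -/
inductive LTL (P : Type) : Type where
  | atom : P → LTL P
  | lnot : LTL P → LTL P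
  | land : LTL P → LTL P → LTL P
  | lor : LTL P → LTL P → LTL P
  | limp : LTL P → LTL P → LTL P
  | liff : LTL P → LTL P → LTL P
  | next : LTL P → LTL P
  | fut : LTL P → LTL P
  | glob : LTL P → LTL P
  | untl : LTL P → LTL P → LTL P
  | rel : LTL P → LTL P → LTL P
  | wuntl : LTL P → LTL P → LTL P
  | mrel : LTL P → LTL P → LTL P

variable {P : Type}

/-- Suffix `w[i:]` of an infinite word. -/
def shift (w : ℕ → Set P) (i : ℕ) : ℕ → Set P := fun n => w (n + i)

/-- The constant infinite word `α^ω`. -/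
def constW (α : Set P) : ℕ → Set P := fun _ => α

/-- LTL semantics on infinite words. -/
def LTL.Sat : LTL P → (ℕ → Set P) → Prop
  | .atom p, w => p ∈ w 0
  | .lnot φ, w => ¬ φ.Sat w
  | .land φ ψ, w => φ.Sat w ∧ ψ.Sat w
  | .lor φ ψ, w => φ.Sat w ∨ ψ.Sat w
  | .limp φ ψ, w => ¬ φ.Sat w ∨ ψ.Sat w
  | .liff φ ψ, w => (φ.Sat w ∧ ψ.Sat w) ∨ (¬ φ.Sat w ∧ ¬ ψ.Sat w)
  | .next φ, w => φ.Sat (shift w 1)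
  | .fut φ, w => ∃ i, φ.Sat (shift w i)
  | .glob φ, w => ∀ i, φ.Sat (shift w i)
  | .untl φ ψ, w => ∃ i, ψ.Sat (shift w i) ∧ ∀ j < i, φ.Sat (shift w j)
  | .rel φ ψ, w => ¬ ∃ i, ¬ ψ.Sat (shift w i) ∧ ∀ j < i, ¬ φ.Sat (shift w j)
  | .wuntl φ ψ, w =>
      (∃ i, ψ.Sat (shift w i) ∧ ∀ j < i, φ.Sat (shift w j)) ∨ ∀ i, φ.Sat (shift w i)
  | .mrel φ ψ, w =>
      (¬ ∃ i, ¬ ψ.Sat (shift w i) ∧ ∀ j < i, ¬ φ.Sat (shift w j)) ∧ ∃ i, φ.Sat (shift w i)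

/-- The set of subformulas of an LTL formula. -/
def LTL.SubF : LTL P → Set (LTL P)
  | .atom p => {.atom p}
  | .lnot φ => insert (.lnot φ) φ.SubF
  | .land φ ψ => insert (.land φ ψ) (φ.SubF ∪ ψ.SubF)
  | .lor φ ψ => insert (.lor φ ψ) (φ.SubF ∪ ψ.SubF)
  | .limp φ ψ => insert (.limp φ ψ) (φ.SubF ∪ ψ.SubF)
  | .liff φ ψ => insert (.liff φ ψ) (φ.SubF ∪ ψ.SubF)
  | .next φ => insert (.next φ) φ.SubF
  | .fut φ => insert (.fut φ) φ.SubF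
  | .glob φ => insert (.glob φ) φ.SubF
  | .untl φ ψ => insert (.untl φ ψ) (φ.SubF ∪ ψ.SubF)
  | .rel φ ψ => insert (.rel φ ψ) (φ.SubF ∪ ψ.SubF)
  | .wuntl φ ψ => insert (.wuntl φ ψ) (φ.SubF ∪ ψ.SubF)
  | .mrel φ ψ => insert (.mrel φ ψ) (φ.SubF ∪ ψ.SubF)

/-- The size of an LTL formula: its number of (distinct) subformulas. -/
noncomputable def LTL.Sz (φ : LTL P) : ℕ := φ.SubF.ncard

/-- The set of atomic propositions occurring in a formula. -/
def LTL.props (φ : LTL P) : Set P := {p : P | LTL.atom p ∈ φ.SubF}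

/-- A formula is temporal-free if no temporal operator occurs in it. -/
inductive LTL.TemporalFree : LTL P → Prop
  | atom (p : P) : TemporalFree (.atom p)
  | lnot {φ : LTL P} : TemporalFree φ → TemporalFree (.lnot φ)
  | land {φ ψ : LTL P} : TemporalFree φ → TemporalFree ψ → TemporalFree (.land φ ψ)
  | lor {φ ψ : LTL P} : TemporalFree φ → TemporalFree ψ → TemporalFree (.lor φ ψ)
  | limp {φ ψ : LTL P} : TemporalFree φ → TemporalFree ψ → TemporalFree (.limp φ ψ)
  | liff {φ ψ : LTL P} : TemporalFree φ → TemporalFree ψ → TemporalFree (.liff φ ψ)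

/-- Concise formulas: atoms, and binary combinations of concise formulas over
disjoint sets of propositions. -/
inductive LTL.Concise : LTL P → Prop
  | atom (p : P) : Concise (.atom p)
  | land {φ ψ : LTL P} : Concise φ → Concise ψ → φ.props ∩ ψ.props = ∅ → Concise (.land φ ψ)
  | lor {φ ψ : LTL P} : Concise φ → Concise ψ → φ.props ∩ ψ.props = ∅ → Concise (.lor φ ψ)
  | limp {φ ψ : LTL P} : Concise φ → Concise ψ → φ.props ∩ ψ.props = ∅ → Concise (.limp φ ψ)
  | liff {φ ψ : LTL P} : Concise φ → Concise ψ → φ.props ∩ ψ.props = ∅ → Concise (.liff φ ψ)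
  | untl {φ ψ : LTL P} : Concise φ → Concise ψ → φ.props ∩ ψ.props = ∅ → Concise (.untl φ ψ)
  | rel {φ ψ : LTL P} : Concise φ → Concise ψ → φ.props ∩ ψ.props = ∅ → Concise (.rel φ ψ)
  | wuntl {φ ψ : LTL P} : Concise φ → Concise ψ → φ.props ∩ ψ.props = ∅ → Concise (.wuntl φ ψ)
  | mrel {φ ψ : LTL P} : Concise φ → Concise ψ → φ.props ∩ ψ.props = ∅ → Concise (.mrel φ ψ)

/-- Formulas in which the only binary operator occurring is `∨`. -/
inductive LTL.OnlyOrBin : LTL P → Prop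
  | atom (p : P) : OnlyOrBin (.atom p)
  | lnot {φ : LTL P} : OnlyOrBin φ → OnlyOrBin (.lnot φ)
  | lor {φ ψ : LTL P} : OnlyOrBin φ → OnlyOrBin ψ → OnlyOrBin (.lor φ ψ)
  | next {φ : LTL P} : OnlyOrBin φ → OnlyOrBin (.next φ)
  | fut {φ : LTL P} : OnlyOrBin φ → OnlyOrBin (.fut φ)
  | glob {φ : LTL P} : OnlyOrBin φ → OnlyOrBin (.glob φ)

/-- Formulas that are disjunctions of atomic propositions, built using only `∨`. -/
inductive LTL.OrOfAtoms : LTL P → Prop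
  | atom (p : P) : OrOfAtoms (.atom p)
  | lor {φ ψ : LTL P} : OrOfAtoms φ → OrOfAtoms ψ → OrOfAtoms (.lor φ ψ)

/- ### The 3-SAT reduction.
Variables `x_k` are indexed by `k < m`; the atomic proposition `(k, true)`
represents `x_k` and `(k, false)` represents `x̄_k`. -/

/-- A literal: a variable index together with its polarity. -/
abbrev Lit := ℕ × Bool

/-- A 3-clause. -/
abbrev Clause3 := Lit × Lit × Lit

/-- A literal holds under a valuation. -/
def litSat (v : ℕ → Bool) (l : Lit) : Prop := v l.1 = l.2

/-- A clause holds under a valuation. -/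
def clauseSat (v : ℕ → Bool) (c : Clause3) : Prop :=
  litSat v c.1 ∨ litSat v c.2.1 ∨ litSat v c.2.2

/-- A valuation satisfies a 3-CNF formula (a list of clauses). -/
def cnfSat (v : ℕ → Bool) (Φ : List Clause3) : Prop := ∀ c ∈ Φ, clauseSat v c

/-- All variables of the 3-CNF formula are among `x_0, …, x_{m-1}`. -/
def cnfVars (m : ℕ) (Φ : List Clause3) : Prop :=
  ∀ c ∈ Φ, c.1.1 < m ∧ c.2.1.1 < m ∧ c.2.2.1 < m

/-- The letter `C_i = {l̃₁, l̃₂, l̃₃}` associated with a clause. -/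
def clauseSet (c : Clause3) : Set Lit := {c.1, c.2.1, c.2.2}

/-- The pair `X_k = {x_k, x̄_k}` of propositions associated with variable `x_k`. -/
def rho (k : ℕ) : Set Lit := {(k, true), (k, false)}

/-- The set `𝒫` of positive words of the reduction. -/
def Pos (m : ℕ) (Φ : List Clause3) : Set (ℕ → Set Lit) :=
  {w | (∃ c ∈ Φ, w = constW (clauseSet c)) ∨ ∃ k < m, w = constW (rho k)}

/-- The negative word `η = ∅^ω`. -/
def negWord : ℕ → Set Lit := constW ∅

/-- `φ` separates `𝒫` and `𝒩 = {η}`. -/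
def Separates (m : ℕ) (Φ : List Clause3) (φ : LTL Lit) : Prop :=
  (∀ w ∈ Pos m Φ, φ.Sat w) ∧ ¬ φ.Sat negWord

/-- All propositions of `φ` are among `{x_k, x̄_k : k < m}`. -/
def propsInRange (m : ℕ) (φ : LTL Lit) : Prop := ∀ p ∈ φ.props, p.1 < m

/-- The disjunction `x_0^v ∨ x_1^v ∨ ⋯ ∨ x_{m-1}^v` (for `m ≥ 1`),
where `x_k^v` is the atom `(k, v k)`. -/
def vDisj (v : ℕ → Bool) : ℕ → LTL Lit
  | 0 => .atom (0, v 0)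
  | 1 => .atom (0, v 0)
  | (k + 2) => .lor (vDisj v (k + 1)) (.atom (k + 1, v (k + 1)))

/-- A formula is disjunctive on a set `I` of variable indices. -/
def DisjunctiveOn (I : Set ℕ) (φ : LTL Lit) : Prop :=
  φ.TemporalFree ∧ φ.Concise ∧ φ.OnlyOrBin ∧
    φ.props.ncard = I.ncard ∧ ∀ k ∈ I, (φ.props ∩ rho k).ncard = 1

/-- A formula is `I`-concise for a set `I` of variable indices. -/
def IConciseOn (I : Set ℕ) (φ : LTL Lit) : Prop :=
  φ.Concise ∧ φ.props.ncard = I.ncard ∧ ∀ k ∈ I, (φ.props ∩ rho k).ncard = 1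

/- ### CTL -/

/-- CTL (state) formulas over `P`; a quantified temporal subformula, e.g. `E(φ U ψ)`,
is a single constructor (`Bool` is the path quantifier: `true` = E, `false` = A). -/
inductive CTL (P : Type) : Type where
  | atom : P → CTL P
  | lnot : CTL P → CTL P
  | land : CTL P → CTL P → CTL P
  | lor : CTL P → CTL P → CTL P
  | limp : CTL P → CTL P → CTL P
  | liff : CTL P → CTL P → CTL P
  | qnext : Bool → CTL P → CTL P
  | qfut : Bool → CTL P → CTL P
  | qglob : Bool → CTL P → CTL P
  | quntl : Bool → CTL P → CTL P → CTL P
  | qrel : Bool → CTL P → CTL P → CTL P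
  | qwuntl : Bool → CTL P → CTL P → CTL P
  | qmrel : Bool → CTL P → CTL P → CTL P

/-- A Kripke structure over `P`. -/
structure Kripke (P : Type) where
  S : Type
  I : Set S
  R : S → S → Prop
  total : ∀ s : S, ∃ t : S, R s t
  L : S → Set P

/-- An infinite path of a Kripke structure. -/
def Kripke.IsPath (M : Kripke P) (π : ℕ → M.S) : Prop := ∀ i, M.R (π i) (π (i + 1))

/-- Path quantification: `q = true` is `E` (some path from `s`), `q = false` is `A`. -/
def Kripke.Q (M : Kripke P) (q : Bool) (s : M.S) (pred : (ℕ → M.S) → Prop) : Prop :=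
  if q then ∃ π : ℕ → M.S, M.IsPath π ∧ π 0 = s ∧ pred π
  else ∀ π : ℕ → M.S, M.IsPath π → π 0 = s → pred π

/-- CTL semantics at a state of a Kripke structure. -/
def CTL.Sat (M : Kripke P) : CTL P → M.S → Prop
  | .atom p, s => p ∈ M.L s
  | .lnot φ, s => ¬ φ.Sat M s
  | .land φ ψ, s => φ.Sat M s ∧ ψ.Sat M s
  | .lor φ ψ, s => φ.Sat M s ∨ ψ.Sat M s
  | .limp φ ψ, s => ¬ φ.Sat M s ∨ ψ.Sat M s
  | .liff φ ψ, s => (φ.Sat M s ∧ ψ.Sat M s) ∨ (¬ φ.Sat M s ∧ ¬ ψ.Sat M s)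
  | .qnext q φ, s => M.Q q s fun π => φ.Sat M (π 1)
  | .qfut q φ, s => M.Q q s fun π => ∃ i, φ.Sat M (π i)
  | .qglob q φ, s => M.Q q s fun π => ∀ i, φ.Sat M (π i)
  | .quntl q φ ψ, s => M.Q q s fun π => ∃ i, ψ.Sat M (π i) ∧ ∀ j < i, φ.Sat M (π j)
  | .qrel q φ ψ, s => M.Q q s fun π => ¬ ∃ i, ¬ ψ.Sat M (π i) ∧ ∀ j < i, ¬ φ.Sat M (π j)
  | .qwuntl q φ ψ, s => M.Q q s fun π =>
      (∃ i, ψ.Sat M (π i) ∧ ∀ j < i, φ.Sat M (π j)) ∨ ∀ i, φ.Sat M (π i)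
  | .qmrel q φ ψ, s => M.Q q s fun π =>
      (¬ ∃ i, ¬ ψ.Sat M (π i) ∧ ∀ j < i, ¬ φ.Sat M (π j)) ∧ ∃ i, φ.Sat M (π i)

/-- `M ⊨ φ`: the formula holds at every initial state. -/
def Kripke.Models (M : Kripke P) (φ : CTL P) : Prop := ∀ s ∈ M.I, φ.Sat M s

/-- The set of subformulas of a CTL formula (a quantified temporal subformula counts
as a single subformula together with the subformulas of its arguments). -/
def CTL.SubF : CTL P → Set (CTL P)
  | .atom p => {.atom p}
  | .lnot φ => insert (.lnot φ) φ.SubF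
  | .land φ ψ => insert (.land φ ψ) (φ.SubF ∪ ψ.SubF)
  | .lor φ ψ => insert (.lor φ ψ) (φ.SubF ∪ ψ.SubF)
  | .limp φ ψ => insert (.limp φ ψ) (φ.SubF ∪ ψ.SubF)
  | .liff φ ψ => insert (.liff φ ψ) (φ.SubF ∪ ψ.SubF)
  | .qnext q φ => insert (.qnext q φ) φ.SubF
  | .qfut q φ => insert (.qfut q φ) φ.SubF
  | .qglob q φ => insert (.qglob q φ) φ.SubF
  | .quntl q φ ψ => insert (.quntl q φ ψ) (φ.SubF ∪ ψ.SubF)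
  | .qrel q φ ψ => insert (.qrel q φ ψ) (φ.SubF ∪ ψ.SubF)
  | .qwuntl q φ ψ => insert (.qwuntl q φ ψ) (φ.SubF ∪ ψ.SubF)
  | .qmrel q φ ψ => insert (.qmrel q φ ψ) (φ.SubF ∪ ψ.SubF)

/-- The size of a CTL formula: its number of (distinct) subformulas. -/
noncomputable def CTL.Sz (φ : CTL P) : ℕ := φ.SubF.ncard

/-- `f_{CTL→LTL}`: erase all path quantifiers. -/
def CTL.toLTL : CTL P → LTL P
  | .atom p => .atom p
  | .lnot φ => .lnot φ.toLTL
  | .land φ ψ => .land φ.toLTL ψ.toLTL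
  | .lor φ ψ => .lor φ.toLTL ψ.toLTL
  | .limp φ ψ => .limp φ.toLTL ψ.toLTL
  | .liff φ ψ => .liff φ.toLTL ψ.toLTL
  | .qnext _ φ => .next φ.toLTL
  | .qfut _ φ => .fut φ.toLTL
  | .qglob _ φ => .glob φ.toLTL
  | .quntl _ φ ψ => .untl φ.toLTL ψ.toLTL
  | .qrel _ φ ψ => .rel φ.toLTL ψ.toLTL
  | .qwuntl _ φ ψ => .wuntl φ.toLTL ψ.toLTL
  | .qmrel _ φ ψ => .mrel φ.toLTL ψ.toLTL

/-- `f_{LTL→CTL}`: insert the quantifier `E` before every temporal operator. -/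
def LTL.toCTL : LTL P → CTL P
  | .atom p => .atom p
  | .lnot φ => .lnot φ.toCTL
  | .land φ ψ => .land φ.toCTL ψ.toCTL
  | .lor φ ψ => .lor φ.toCTL ψ.toCTL
  | .limp φ ψ => .limp φ.toCTL ψ.toCTL
  | .liff φ ψ => .liff φ.toCTL ψ.toCTL
  | .next φ => .qnext true φ.toCTL
  | .fut φ => .qfut true φ.toCTL
  | .glob φ => .qglob true φ.toCTL
  | .untl φ ψ => .quntl true φ.toCTL ψ.toCTL
  | .rel φ ψ => .qrel true φ.toCTL ψ.toCTL
  | .wuntl φ ψ => .qwuntl true φ.toCTL ψ.toCTL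
  | .mrel φ ψ => .qmrel true φ.toCTL ψ.toCTL

/-- The one-state Kripke structure `M_{α^ω}`. -/
def singleKripke (α : Set P) : Kripke P where
  S := Unit
  I := Set.univ
  R := fun _ _ => True
  total := fun s => ⟨s, trivial⟩
  L := fun _ => α

/-
If `v` satisfies `Φ`, the disjunction of the `m` literals made true by `v` has `2m - 1` subformulas
and holds on a constant word exactly when its letter contains one of them; so it accepts every
`C_i^ω` and every `ρ_k` and rejects `∅^ω`.

Conversely, on constant words satisfaction only depends on which propositions of `φ` the letter
contains, so a separating `φ` mentions a literal of every clause and of every pair `{x_k, x̄_k}`.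
A formula with `q` distinct propositions has at least `2q - 1` subformulas, since every binary
operator joins the propositions of its two arguments; hence `Sz φ ≤ 2m - 1` forces `φ` to mention
exactly one literal of each variable, and these literals define a satisfying valuation.
-/

open Set

theorem LTL.mem_range_atom_or_subF_eq_insert (φ : LTL P) : φ ∈ range LTL.atom ∨
    ∃ φ₁ φ₂ : LTL P, sizeOf φ₁ < sizeOf φ ∧ sizeOf φ₂ < sizeOf φ ∧ φ ∉ range LTL.atom ∧
      φ.SubF = insert φ (φ₁.SubF ∪ φ₂.SubF) := by
  cases φ with
  | atom p => exact Or.inl ⟨p, rfl⟩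
  | lnot φ | next φ | fut φ | glob φ =>
    exact Or.inr ⟨φ, φ, by simp, by simp, by simp, by simp [LTL.SubF]⟩
  | land φ ψ | lor φ ψ | limp φ ψ | liff φ ψ | untl φ ψ | rel φ ψ | wuntl φ ψ | mrel φ ψ =>
    exact Or.inr ⟨φ, ψ, by simp; omega, by simp, by simp, rfl⟩

theorem LTL.subF_subset_of_mem {χ φ : LTL P} (h : χ ∈ φ.SubF) : χ.SubF ⊆ φ.SubF := by
  rcases φ.mem_range_atom_or_subF_eq_insert with ⟨p, rfl⟩ | ⟨φ₁, φ₂, h₁, h₂, -, hφ⟩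
  · rw [show χ = .atom p from h]
  · rw [hφ] at h ⊢
    rcases h with rfl | h | h
    · exact hφ ▸ subset_rfl
    · exact (subF_subset_of_mem h).trans (subset_union_left.trans (subset_insert _ _))
    · exact (subF_subset_of_mem h).trans (subset_union_right.trans (subset_insert _ _))
termination_by sizeOf φ

theorem LTL.sizeOf_le_of_mem_subF {χ φ : LTL P} (h : χ ∈ φ.SubF) : sizeOf χ ≤ sizeOf φ := by
  rcases φ.mem_range_atom_or_subF_eq_insert with ⟨p, rfl⟩ | ⟨φ₁, φ₂, h₁, h₂, -, hφ⟩
  · rw [show χ = .atom p from h]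
  · rw [hφ] at h
    rcases h with rfl | h | h
    · rfl
    · exact (sizeOf_le_of_mem_subF h).trans h₁.le
    · exact (sizeOf_le_of_mem_subF h).trans h₂.le
termination_by sizeOf φ

theorem LTL.subF_finite (φ : LTL P) : φ.SubF.Finite := by
  induction φ <;> simp [LTL.SubF, *]

def SubformulaClosed (B : Set (LTL P)) : Prop := ∀ χ ∈ B, χ.SubF ⊆ B

theorem SubformulaClosed.union {B C : Set (LTL P)} (hB : SubformulaClosed B)
    (hC : SubformulaClosed C) : SubformulaClosed (B ∪ C) := by
  rintro χ (h | h)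
  · exact (hB χ h).trans subset_union_left
  · exact (hC χ h).trans subset_union_right

theorem LTL.subformulaClosed_subF (φ : LTL P) : SubformulaClosed φ.SubF :=
  fun _ => LTL.subF_subset_of_mem

/- Subformulas may be shared, hence the count relative to a subformula-closed set `B` of formulas
counted already: at a binary root, the new atoms of the right argument are counted against `B`
together with the subformulas of the left one. -/
theorem LTL.encard_atoms_le_encard_nonatoms_add_one (φ : LTL P) {B : Set (LTL P)}
    (hB : SubformulaClosed B) :
    ((φ.SubF \ B) ∩ range LTL.atom).encard ≤ ((φ.SubF \ B) \ range LTL.atom).encard + 1 := by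
  rcases φ.mem_range_atom_or_subF_eq_insert with ⟨p, rfl⟩ | ⟨φ₁, φ₂, h₁, h₂, hφ, hsub⟩
  · calc _ ≤ ({LTL.atom p} : Set (LTL P)).encard :=
          encard_le_encard (inter_subset_left.trans sdiff_subset)
      _ ≤ _ := by simp
  by_cases hφB : φ ∈ B
  · simp [sdiff_eq_empty.2 (hB φ hφB)]
  set D₁ := φ₁.SubF \ B
  set D₂ := φ₂.SubF \ (B ∪ φ₁.SubF)
  have hsplit : φ.SubF \ B = insert φ (D₁ ∪ D₂) := by
    rw [hsub]; ext χ; simp only [D₁, D₂, mem_sdiff, mem_insert_iff, mem_union]; grind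
  have hdisj : Disjoint D₁ D₂ := disjoint_left.2 fun χ h₁ h₂ => h₂.2 (Or.inr h₁.1)
  have hφD : φ ∉ D₁ ∪ D₂ := by
    rintro (h | h) <;> exact absurd (LTL.sizeOf_le_of_mem_subF h.1) (by omega)
  have ih₁ := φ₁.encard_atoms_le_encard_nonatoms_add_one hB
  have ih₂ := φ₂.encard_atoms_le_encard_nonatoms_add_one (hB.union φ₁.subformulaClosed_subF)
  rw [hsplit, insert_inter_of_notMem hφ, insert_sdiff_of_notMem _ hφ,
    encard_insert_of_notMem (fun h => hφD h.1), union_inter_distrib_right, union_sdiff_distrib,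
    encard_union_eq (hdisj.mono inter_subset_left inter_subset_left),
    encard_union_eq (hdisj.mono sdiff_subset sdiff_subset)]
  calc _ ≤ ((D₁ \ range LTL.atom).encard + 1) + ((D₂ \ range LTL.atom).encard + 1) :=
        add_le_add ih₁ ih₂
    _ = _ := by ring
termination_by sizeOf φ

theorem LTL.atom_injective : Function.Injective (LTL.atom : P → LTL P) := fun _ _ => LTL.atom.inj

theorem LTL.image_atom_props (φ : LTL P) : LTL.atom '' φ.props = φ.SubF ∩ range LTL.atom := by
  ext χ
  simp only [LTL.props, mem_image, mem_ofPred_eq, mem_inter_iff, mem_range]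
  grind

theorem LTL.props_finite (φ : LTL P) : φ.props.Finite :=
  φ.subF_finite.preimage LTL.atom_injective.injOn

theorem LTL.two_mul_ncard_props_le (φ : LTL P) : 2 * φ.props.ncard ≤ φ.Sz + 1 := by
  have hcount := φ.encard_atoms_le_encard_nonatoms_add_one (B := ∅) fun _ h => h.elim
  rw [sdiff_empty, ← φ.image_atom_props, LTL.atom_injective.encard_image,
    ← φ.props_finite.cast_ncard_eq, ← (φ.subF_finite.sdiff).cast_ncard_eq] at hcount
  have hsz : φ.Sz = (φ.SubF \ range LTL.atom).ncard + φ.props.ncard := by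
    rw [LTL.Sz, ← ncard_inter_add_ncard_sdiff_eq_ncard φ.SubF (range LTL.atom) φ.subF_finite,
      ← φ.image_atom_props, ncard_image_of_injective _ LTL.atom_injective, add_comm]
  have : φ.props.ncard ≤ (φ.SubF \ range LTL.atom).ncard + 1 := by exact_mod_cast hcount
  omega

theorem shift_constW (α : Set P) (i : ℕ) : shift (constW α) i = constW α := rfl

theorem LTL.sat_constW_congr (φ : LTL P) {α β : Set P} (h : ∀ p ∈ φ.props, p ∈ α ↔ p ∈ β) :
    φ.Sat (constW α) ↔ φ.Sat (constW β) := by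
  induction φ with
  | atom p => exact h p rfl
  | lnot φ ih | next φ ih | fut φ ih | glob φ ih =>
    simp only [LTL.Sat, shift_constW, ih fun p hp => h p (Or.inr hp)]
  | land φ ψ ih₁ ih₂ | lor φ ψ ih₁ ih₂ | limp φ ψ ih₁ ih₂ | liff φ ψ ih₁ ih₂ | untl φ ψ ih₁ ih₂
  | rel φ ψ ih₁ ih₂ | wuntl φ ψ ih₁ ih₂ | mrel φ ψ ih₁ ih₂ =>
    simp only [LTL.Sat, shift_constW, ih₁ fun p hp => h p (Or.inr (Or.inl hp)),
      ih₂ fun p hp => h p (Or.inr (Or.inr hp))]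

theorem LTL.inter_props_nonempty_of_sat_constW {φ : LTL P} {α : Set P} (hneg : ¬ φ.Sat (constW ∅))
    (hα : φ.Sat (constW α)) : (α ∩ φ.props).Nonempty := by
  by_contra hempty
  refine hneg ((φ.sat_constW_congr fun p hp => ?_).1 hα)
  simpa using fun hpα => hempty ⟨p, hpα, hp⟩

theorem clauseSat_iff_exists_mem_clauseSet {v : ℕ → Bool} {c : Clause3} :
    clauseSat v c ↔ ∃ l ∈ clauseSet c, litSat v l := by
  simp [clauseSat, clauseSet]

theorem cnfVars.lt_of_mem_clauseSet {m : ℕ} {Φ : List Clause3} (h : cnfVars m Φ) {c : Clause3}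
    (hc : c ∈ Φ) {l : Lit} (hl : l ∈ clauseSet c) : l.1 < m := by
  rcases hl with rfl | rfl | rfl
  exacts [(h c hc).1, (h c hc).2.1, (h c hc).2.2]

theorem exists_forall_litSat_of_ncard_le {m : ℕ} {S : Set Lit} (hS : ∀ l ∈ S, l.1 < m)
    (hmeet : ∀ k < m, (rho k ∩ S).Nonempty) (hcard : S.ncard ≤ m) :
    ∃ v : ℕ → Bool, ∀ l ∈ S, litSat v l := by
  have hfin : S.Finite := ((finite_Iio m).prod finite_univ).subset fun l hl => ⟨hS l hl, trivial⟩
  have himage : Prod.fst '' S = Iio m := by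
    refine Subset.antisymm (image_subset_iff.2 hS) fun k hk => ?_
    obtain ⟨l, hlk, hlS⟩ := hmeet k hk
    rcases hlk with rfl | rfl <;> exact ⟨_, hlS, rfl⟩
  have hinj : InjOn Prod.fst S := injOn_of_ncard_image_eq
    (le_antisymm (ncard_image_le hfin) (by rwa [himage, ncard_Iio_nat])) hfin
  classical
  refine ⟨fun k => decide ((k, true) ∈ S), fun ⟨k, b⟩ hl => ?_⟩
  cases b
  · have hnot : (k, true) ∉ S := fun htrue => absurd (hinj htrue hl rfl) (by simp)
    simpa [litSat] using hnot
  · simpa [litSat] using hl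

theorem props_vDisj_lt (v : ℕ → Bool) (n : ℕ) :
    ∀ l ∈ (vDisj v (n + 1)).props, l.1 < n + 1 := by
  induction n with
  | zero =>
    intro l hl
    obtain rfl : l = (0, v 0) := LTL.atom.inj hl
    exact Nat.zero_lt_one
  | succ n ih =>
    rintro l (h | hl | hl)
    · nomatch h
    · exact (ih l hl).trans (Nat.lt_succ_self _)
    · obtain rfl : l = (n + 1, v (n + 1)) := LTL.atom.inj hl
      exact Nat.lt_succ_self _

theorem sz_vDisj_le (v : ℕ → Bool) (n : ℕ) : (vDisj v (n + 1)).Sz ≤ 2 * n + 1 := by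
  induction n with
  | zero => simp [LTL.Sz, vDisj, LTL.SubF]
  | succ n ih =>
    calc (vDisj v (n + 2)).Sz
        ≤ ((vDisj v (n + 1)).SubF ∪ {LTL.atom (n + 1, v (n + 1))}).ncard + 1 :=
          ncard_insert_le _ _
      _ ≤ (vDisj v (n + 1)).Sz + 1 + 1 := by
          grw [ncard_union_le, ncard_singleton]; rfl
      _ ≤ 2 * (n + 1) + 1 := by omega

theorem sat_vDisj_iff (v : ℕ → Bool) (w : ℕ → Set Lit) (n : ℕ) :
    (vDisj v (n + 1)).Sat w ↔ ∃ k < n + 1, (k, v k) ∈ w 0 := by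
  induction n with
  | zero => simp [vDisj, LTL.Sat]
  | succ n ih =>
    rw [show (vDisj v (n + 2)).Sat w ↔ (vDisj v (n + 1)).Sat w ∨ (n + 1, v (n + 1)) ∈ w 0 from
      Iff.rfl, ih]
    grind

theorem separates_vDisj {n : ℕ} {Φ : List Clause3} (hvars : cnfVars (n + 1) Φ) {v : ℕ → Bool}
    (hv : cnfSat v Φ) : Separates (n + 1) Φ (vDisj v (n + 1)) := by
  refine ⟨?_, by simp [negWord, constW, sat_vDisj_iff]⟩
  rintro w (⟨c, hc, rfl⟩ | ⟨k, hk, rfl⟩) <;> rw [sat_vDisj_iff]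
  · obtain ⟨l, hl, hlv⟩ := clauseSat_iff_exists_mem_clauseSet.1 (hv c hc)
    refine ⟨l.1, hvars.lt_of_mem_clauseSet hc hl, ?_⟩
    rwa [show (l.1, v l.1) = l from Prod.ext rfl hlv]
  · exact ⟨k, hk, by cases v k <;> simp [constW, rho]⟩

theorem exists_cnfSat_of_separates {m : ℕ} {Φ : List Clause3} {φ : LTL Lit}
    (hrange : propsInRange m φ) (hsz : φ.Sz ≤ 2 * m - 1) (hsep : Separates m Φ φ) :
    ∃ v : ℕ → Bool, cnfSat v Φ := by
  obtain ⟨hpos, hneg⟩ := hsep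
  have hmeet (k : ℕ) (hk : k < m) : (rho k ∩ φ.props).Nonempty :=
    LTL.inter_props_nonempty_of_sat_constW hneg (hpos _ (Or.inr ⟨k, hk, rfl⟩))
  have hcard : φ.props.ncard ≤ m := by
    have := φ.two_mul_ncard_props_le
    omega
  obtain ⟨v, hv⟩ := exists_forall_litSat_of_ncard_le hrange hmeet hcard
  refine ⟨v, fun c hc => ?_⟩
  obtain ⟨l, hlc, hlφ⟩ :=
    LTL.inter_props_nonempty_of_sat_constW hneg (hpos _ (Or.inl ⟨c, hc, rfl⟩))
  exact clauseSat_iff_exists_mem_clauseSet.2 ⟨l, hlc, hv l hlφ⟩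

/-- `Φ` is satisfiable iff some LTL formula of size at most `2m - 1`
separates `𝒫` and `𝒩`. -/
theorem ltl_learning_reduction_correct (m : ℕ) (hm : 0 < m) (Φ : List Clause3)
    (hvars : cnfVars m Φ) :
    (∃ v : ℕ → Bool, cnfSat v Φ) ↔
      ∃ φ : LTL Lit, propsInRange m φ ∧ φ.Sz ≤ 2 * m - 1 ∧ Separates m Φ φ := by
  constructor
  · rintro ⟨v, hv⟩
    obtain ⟨n, rfl⟩ : ∃ n, m = n + 1 := ⟨m - 1, by omega⟩
    have hsz := sz_vDisj_le v n
    exact ⟨vDisj v (n + 1), props_vDisj_lt v n, by omega, separates_vDisj hvars hv⟩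
  · rintro ⟨φ, hrange, hsz, hsep⟩
    exact exists_cnfSat_of_separates hrange hsz hsep

end Temporal
end

section
/- If the 3-CNF formula Φ over variables x₁,…,xₘ is satisfiable, then there exists an LTL formula φ with Sz(φ) = 2m − 1 that separates 𝒫 and 𝒩; indeed, for a satisfying valuation v one may take φ := x₁^v ∨ x₂^v ∨ ⋯ ∨ xₘ^v, where x_k^v := x_k if v(x_k) = ⊤ and x_k^v := x̄_k if v(x_k) = ⊥. -/
namespace Temporal

variable {P : Type}

lemma vDisj_sat (v : ℕ → Bool) : ∀ n (w : ℕ → Set Lit),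
    (vDisj v (n+1)).Sat w ↔ ∃ j ≤ n, (j, v j) ∈ w 0 := by
  intro n
  induction n with
  | zero => intro w; simp [vDisj, LTL.Sat]
  | succ n ih =>
    intro w
    have : (vDisj v (n+2)).Sat w ↔ (vDisj v (n+1)).Sat w ∨ (n+1, v (n+1)) ∈ w 0 := by
      simp only [vDisj, LTL.Sat]
    rw [this, ih]
    constructor
    · rintro (⟨j, hj, h⟩ | h)
      · exact ⟨j, by omega, h⟩
      · exact ⟨n+1, le_refl _, h⟩
    · rintro ⟨j, hj, h⟩
      rcases Nat.lt_or_ge j (n+1) with h' | h'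
      · exact Or.inl ⟨j, by omega, h⟩
      · have : j = n+1 := by omega
        subst this; exact Or.inr h

lemma vDisj_subf (v : ℕ → Bool) : ∀ n, ∀ ψ ∈ (vDisj v (n+1)).SubF,
    (∃ j ≤ n, ψ = LTL.atom (j, v j)) ∨
    (∃ j, 1 ≤ j ∧ j ≤ n ∧ ψ = LTL.lor (vDisj v j) (LTL.atom (j, v j))) := by
  intro n
  induction n with
  | zero =>
    intro ψ hψ
    simp only [vDisj, LTL.SubF, Set.mem_singleton_iff] at hψ
    exact Or.inl ⟨0, le_refl _, hψ⟩
  | succ n ih =>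
    intro ψ hψ
    have h : ψ = LTL.lor (vDisj v (n+1)) (LTL.atom (n+1, v (n+1))) ∨
        ψ = LTL.atom (n+1, v (n+1)) ∨ ψ ∈ (vDisj v (n+1)).SubF := by
      simpa [vDisj, LTL.SubF, Set.mem_insert_iff, Set.mem_union] using hψ
    rcases h with h | h | h
    · exact Or.inr ⟨n+1, by omega, le_refl _, h⟩
    · exact Or.inl ⟨n+1, le_refl _, h⟩
    · rcases ih ψ h with ⟨j, hj, h⟩ | ⟨j, hj1, hj2, h⟩
      · exact Or.inl ⟨j, by omega, h⟩
      · exact Or.inr ⟨j, hj1, by omega, h⟩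

lemma vDisj_card (v : ℕ → Bool) : ∀ n,
    (vDisj v (n+1)).SubF.Finite ∧ (vDisj v (n+1)).SubF.ncard = 2*(n+1) - 1 := by
  intro n
  induction n with
  | zero =>
    constructor
    · simp only [vDisj, LTL.SubF]; exact Set.finite_singleton _
    · simp [vDisj, LTL.SubF]
  | succ n ih =>
    obtain ⟨hfin, hcard⟩ := ih
    have hnotatom : LTL.atom (n+1, v (n+1)) ∉ (vDisj v (n+1)).SubF := by
      intro h
      rcases vDisj_subf v n _ h with ⟨j, hj, h⟩ | ⟨j, _, hj, h⟩
      · simp only [LTL.atom.injEq, Prod.mk.injEq] at h; omega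
      · simp at h
    have hnotlor : LTL.lor (vDisj v (n+1)) (LTL.atom (n+1, v (n+1))) ∉
        (vDisj v (n+1)).SubF := by
      intro h
      rcases vDisj_subf v n _ h with ⟨j, hj, h⟩ | ⟨j, _, hj, h⟩
      · simp at h
      · simp only [LTL.lor.injEq, LTL.atom.injEq, Prod.mk.injEq] at h; omega
    have heq : (vDisj v (n+2)).SubF =
        insert (LTL.lor (vDisj v (n+1)) (LTL.atom (n+1, v (n+1))))
          (insert (LTL.atom (n+1, v (n+1))) (vDisj v (n+1)).SubF) := by
      show (LTL.lor (vDisj v (n+1)) (LTL.atom (n+1, v (n+1)))).SubF = _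
      simp only [LTL.SubF]
      rw [Set.union_comm, Set.singleton_union]
    have hfin1 : (insert (LTL.atom (n+1, v (n+1))) (vDisj v (n+1)).SubF).Finite :=
      hfin.insert _
    have hne : LTL.lor (vDisj v (n+1)) (LTL.atom (n+1, v (n+1))) ∉
        insert (LTL.atom (n+1, v (n+1))) (vDisj v (n+1)).SubF := by
      intro h
      rcases Set.mem_insert_iff.mp h with h | h
      · simp at h
      · exact hnotlor h
    constructor
    · rw [heq]; exact (hfin1.insert _)
    · rw [heq, Set.ncard_insert_of_notMem hne hfin1,
        Set.ncard_insert_of_notMem hnotatom hfin, hcard]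
      omega

lemma vDisj_separates (m : ℕ) (hm : 0 < m) (Φ : List Clause3) (hvars : cnfVars m Φ)
    (v : ℕ → Bool) (hv : cnfSat v Φ) : Separates m Φ (vDisj v m) := by
  obtain ⟨m', rfl⟩ : ∃ m', m = m' + 1 := ⟨m - 1, by omega⟩
  constructor
  · rintro w (⟨c, hc, rfl⟩ | ⟨k, hk, rfl⟩)
    · rw [vDisj_sat]
      obtain ⟨h1, h2, h3⟩ := hvars c hc
      rcases hv c hc with h | h | h
      · exact ⟨c.1.1, by omega, by
          show (c.1.1, v c.1.1) ∈ clauseSet c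
          rw [h]
          exact Or.inl rfl⟩
      · exact ⟨c.2.1.1, by omega, by
          show (c.2.1.1, v c.2.1.1) ∈ clauseSet c
          rw [h]
          exact Or.inr (Or.inl rfl)⟩
      · exact ⟨c.2.2.1, by omega, by
          show (c.2.2.1, v c.2.2.1) ∈ clauseSet c
          rw [h]
          exact Or.inr (Or.inr rfl)⟩
    · rw [vDisj_sat]
      refine ⟨k, by omega, ?_⟩
      show (k, v k) ∈ rho k
      cases h : v k <;> simp [rho]
  · rw [vDisj_sat]
    rintro ⟨j, _, h⟩
    exact h

/-- if `Φ` is satisfiable, there is a separating formula of size exactly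
`2m - 1`; indeed, for every satisfying valuation `v` the disjunction
`x_1^v ∨ ⋯ ∨ x_m^v` works. -/
theorem easy_direction (m : ℕ) (hm : 0 < m) (Φ : List Clause3) (hvars : cnfVars m Φ)
    (hsat : ∃ v : ℕ → Bool, cnfSat v Φ) :
    (∃ φ : LTL Lit, φ.Sz = 2 * m - 1 ∧ Separates m Φ φ) ∧
      ∀ v : ℕ → Bool, cnfSat v Φ →
        (vDisj v m).Sz = 2 * m - 1 ∧ Separates m Φ (vDisj v m) := by
  have key : ∀ v : ℕ → Bool, cnfSat v Φ →
      (vDisj v m).Sz = 2 * m - 1 ∧ Separates m Φ (vDisj v m) := by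
    intro v hv
    obtain ⟨m', rfl⟩ : ∃ m', m = m' + 1 := ⟨m - 1, by omega⟩
    exact ⟨(vDisj_card v m').2, vDisj_separates _ hm Φ hvars v hv⟩
  obtain ⟨v, hv⟩ := hsat
  exact ⟨⟨vDisj v m, key v hv⟩, key⟩

end Temporal
end

section
/- If some LTL formula φ with Sz(φ) ≤ 2m − 1 separates 𝒫 and 𝒩, then the 3-CNF formula Φ over variables x₁,…,xₘ is satisfiable. -/
namespace Temporal

variable {P : Type}

/-!
On a constant word `α^ω` the truth of `φ` depends only on `α ∩ props φ`, so a formula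
separating `𝒫` from `∅^ω` must mention a proposition of every clause letter `C_i` and of
every pair `{x_k, x̄_k}`. On the other hand `φ` has at most one more distinct atomic
subformula than non-atomic ones, so `2 |props φ| ≤ Sz φ + 1 ≤ 2m`. Hence `props φ` holds
exactly one literal of each variable, and the valuation read off these literals satisfies
every clause.
-/

namespace LTL

/-- Unary operators appear with `ψ₁ = ψ₂`. -/
theorem eq_atom_or_subF_eq_insert (φ : LTL P) :
    (∃ p, φ = atom p) ∨ φ ∉ Set.range atom ∧ ∃ ψ₁ ψ₂ : LTL P, sizeOf ψ₁ < sizeOf φ ∧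
      sizeOf ψ₂ < sizeOf φ ∧ φ.SubF = insert φ (ψ₁.SubF ∪ ψ₂.SubF) := by
  cases φ with
  | atom p => exact .inl ⟨p, rfl⟩
  | lnot ψ | next ψ | fut ψ | glob ψ =>
    exact .inr ⟨by simp, ψ, ψ, by simp, by simp, by simp [SubF]⟩
  | land ψ₁ ψ₂ | lor ψ₁ ψ₂ | limp ψ₁ ψ₂ | liff ψ₁ ψ₂ | untl ψ₁ ψ₂ | rel ψ₁ ψ₂
  | wuntl ψ₁ ψ₂ | mrel ψ₁ ψ₂ =>
    exact .inr ⟨by simp, ψ₁, ψ₂, by simp +arith, by simp, rfl⟩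

theorem mem_subF_self (φ : LTL P) : φ ∈ φ.SubF := by
  cases φ <;> simp [SubF]

theorem subF_finite_s2 (φ : LTL P) : φ.SubF.Finite := by
  rcases φ.eq_atom_or_subF_eq_insert with ⟨p, rfl⟩ | ⟨-, ψ₁, ψ₂, h₁, h₂, hsub⟩
  · exact Set.finite_singleton _
  · rw [hsub]
    exact ((subF_finite_s2 ψ₁).union (subF_finite_s2 ψ₂)).insert φ
termination_by sizeOf φ

theorem subF_subset_of_mem_s2 {φ ψ : LTL P} (h : ψ ∈ φ.SubF) : ψ.SubF ⊆ φ.SubF := by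
  rcases φ.eq_atom_or_subF_eq_insert with ⟨p, rfl⟩ | ⟨-, ψ₁, ψ₂, h₁, h₂, hsub⟩
  · rw [Set.mem_singleton_iff.1 h]
  · rw [hsub] at h ⊢
    rcases h with rfl | h | h
    · rw [← hsub]
    · exact (subF_subset_of_mem_s2 h).trans (Set.subset_union_left.trans (Set.subset_insert _ _))
    · exact (subF_subset_of_mem_s2 h).trans (Set.subset_union_right.trans (Set.subset_insert _ _))
termination_by sizeOf φ

theorem sizeOf_le_of_mem_subF_s2 {φ ψ : LTL P} (h : ψ ∈ φ.SubF) : sizeOf ψ ≤ sizeOf φ := by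
  rcases φ.eq_atom_or_subF_eq_insert with ⟨p, rfl⟩ | ⟨-, ψ₁, ψ₂, h₁, h₂, hsub⟩
  · rw [Set.mem_singleton_iff.1 h]
  · rw [hsub] at h
    rcases h with rfl | h | h
    · rfl
    · exact (sizeOf_le_of_mem_subF_s2 h).trans h₁.le
    · exact (sizeOf_le_of_mem_subF_s2 h).trans h₂.le
termination_by sizeOf φ

theorem notMem_subF_of_sizeOf_lt {φ ψ : LTL P} (h : sizeOf ψ < sizeOf φ) : φ ∉ ψ.SubF :=
  fun hφ => (sizeOf_le_of_mem_subF_s2 hφ).not_gt h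

theorem props_finite_s2 (φ : LTL P) : φ.props.Finite :=
  φ.subF_finite_s2.preimage (Set.injOn_of_injective fun _ _ h => atom.inj h)

theorem props_subset_of_mem_subF {φ ψ : LTL P} (h : ψ ∈ φ.SubF) : ψ.props ⊆ φ.props :=
  fun _ hp => subF_subset_of_mem_s2 h hp

theorem shift_constW (α : Set P) (i : ℕ) : shift (constW α) i = constW α := rfl

theorem sat_constW_congr_s2 {α β : Set P} (φ : LTL P) (h : ∀ p ∈ φ.props, p ∈ α ↔ p ∈ β) :
    φ.Sat (constW α) ↔ φ.Sat (constW β) := by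
  induction φ with
  | atom p => exact h p (mem_subF_self _)
  | lnot ψ ih | next ψ ih | fut ψ ih | glob ψ ih =>
    simp only [Sat, shift_constW,
      ih fun p hp => h p (props_subset_of_mem_subF (by simp [SubF, mem_subF_self]) hp)]
  | land ψ₁ ψ₂ ih₁ ih₂ | lor ψ₁ ψ₂ ih₁ ih₂ | limp ψ₁ ψ₂ ih₁ ih₂ | liff ψ₁ ψ₂ ih₁ ih₂
  | untl ψ₁ ψ₂ ih₁ ih₂ | rel ψ₁ ψ₂ ih₁ ih₂ | wuntl ψ₁ ψ₂ ih₁ ih₂ | mrel ψ₁ ψ₂ ih₁ ih₂ =>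
    simp only [Sat, shift_constW,
      ih₁ fun p hp => h p (props_subset_of_mem_subF (by simp [SubF, mem_subF_self]) hp),
      ih₂ fun p hp => h p (props_subset_of_mem_subF (by simp [SubF, mem_subF_self]) hp)]

theorem exists_mem_props_of_sat_constW {φ : LTL P} {α : Set P} (hα : φ.Sat (constW α))
    (hempty : ¬ φ.Sat (constW ∅)) : ∃ p ∈ φ.props, p ∈ α := by
  by_contra! hdisj
  exact hempty ((sat_constW_congr_s2 φ fun p hp => by simp [hdisj p hp]).1 hα)

/-- Removing a subformula-closed set `B` of already counted subformulas is what handles sharing: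
the second argument of a binary operator is counted relative to `B ∪ SubF ψ₁`. -/
theorem ncard_atom_preimage_subF_sdiff_le (φ : LTL P) {B : Set (LTL P)}
    (hB : ∀ χ ∈ B, χ.SubF ⊆ B) :
    (atom ⁻¹' (φ.SubF \ B)).ncard ≤ ((φ.SubF \ B) \ Set.range atom).ncard + 1 := by
  rcases φ.eq_atom_or_subF_eq_insert with ⟨p, rfl⟩ | ⟨hφ, ψ₁, ψ₂, h₁, h₂, hsub⟩
  · calc (atom ⁻¹' ((atom p).SubF \ B)).ncard ≤ ({p} : Set P).ncard :=
          Set.ncard_le_ncard fun q hq => atom.inj hq.1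
      _ ≤ _ := by simp
  by_cases hφB : φ ∈ B
  · simp [Set.sdiff_eq_empty.2 (hB φ hφB)]
  set B' := B ∪ ψ₁.SubF
  have hB' : ∀ χ ∈ B', χ.SubF ⊆ B' := by
    rintro χ (hχ | hχ)
    · exact (hB χ hχ).trans Set.subset_union_left
    · exact (subF_subset_of_mem_s2 hχ).trans Set.subset_union_right
  have hsplit : φ.SubF \ B = insert φ ((ψ₁.SubF \ B) ∪ (ψ₂.SubF \ B')) := by
    rw [hsub]; ext χ; simp only [B', Set.mem_sdiff, Set.mem_insert_iff, Set.mem_union]; grind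
  set N₁ := (ψ₁.SubF \ B) \ Set.range atom
  set N₂ := (ψ₂.SubF \ B') \ Set.range atom
  have hdisj : Disjoint N₁ N₂ :=
    Set.disjoint_left.2 fun χ hχ₁ hχ₂ => hχ₂.1.2 (Or.inr hχ₁.1.1)
  have hφN : φ ∉ N₁ ∪ N₂ := by
    rintro (hχ | hχ)
    exacts [notMem_subF_of_sizeOf_lt h₁ hχ.1.1, notMem_subF_of_sizeOf_lt h₂ hχ.1.1]
  have hfin₁ : N₁.Finite := ψ₁.subF_finite_s2.sdiff.sdiff
  have hfin₂ : N₂.Finite := ψ₂.subF_finite_s2.sdiff.sdiff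
  calc (atom ⁻¹' (φ.SubF \ B)).ncard
      = (atom ⁻¹' (ψ₁.SubF \ B) ∪ atom ⁻¹' (ψ₂.SubF \ B')).ncard := by
        rw [hsplit, ← Set.preimage_union]
        congr 1; ext q; simp only [Set.mem_preimage, Set.mem_insert_iff, or_iff_right_iff_imp]
        rintro rfl; exact absurd ⟨q, rfl⟩ hφ
    _ ≤ (atom ⁻¹' (ψ₁.SubF \ B)).ncard + (atom ⁻¹' (ψ₂.SubF \ B')).ncard :=
        Set.ncard_union_le _ _
    _ ≤ (N₁.ncard + 1) + (N₂.ncard + 1) :=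
        add_le_add (ncard_atom_preimage_subF_sdiff_le ψ₁ hB)
          (ncard_atom_preimage_subF_sdiff_le ψ₂ hB')
    _ = (insert φ (N₁ ∪ N₂)).ncard + 1 := by
        rw [Set.ncard_insert_of_notMem hφN (hfin₁.union hfin₂),
          Set.ncard_union_eq hdisj hfin₁ hfin₂]
        ring
    _ = ((φ.SubF \ B) \ Set.range atom).ncard + 1 := by
        rw [hsplit, Set.insert_sdiff_of_notMem _ hφ, Set.union_sdiff_distrib]
termination_by sizeOf φ

theorem two_mul_ncard_props_le_s2 (φ : LTL P) : 2 * φ.props.ncard ≤ φ.Sz + 1 := by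
  have hcount : φ.props.ncard ≤ (φ.SubF \ Set.range atom).ncard + 1 := by
    have := φ.ncard_atom_preimage_subF_sdiff_le (B := ∅) (by simp)
    rwa [Set.sdiff_empty] at this
  have hatoms : (φ.SubF ∩ Set.range atom).ncard = φ.props.ncard := by
    rw [← Set.image_preimage_eq_inter_range]
    exact Set.ncard_image_of_injective _ fun _ _ h => atom.inj h
  have hsplit := Set.ncard_inter_add_ncard_sdiff_eq_ncard φ.SubF (Set.range atom) φ.subF_finite_s2
  rw [Sz]
  omega

end LTL

theorem _root_.Set.injOn_of_subset_image_of_ncard_le {α β : Type*} {f : α → β} {s : Set α}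
    {t : Set β} (hs : s.Finite) (hst : t ⊆ f '' s) (hcard : s.ncard ≤ t.ncard) : Set.InjOn f s := by
  refine Set.injOn_of_ncard_image_eq (le_antisymm (Set.ncard_image_le hs) ?_) hs
  exact hcard.trans (Set.ncard_le_ncard hst (hs.image f))

theorem exists_litSat_of_injOn_fst {A : Set Lit} (hA : Set.InjOn Prod.fst A) :
    ∃ v : ℕ → Bool, ∀ l ∈ A, litSat v l := by
  classical
  refine ⟨fun k => decide ((k, true) ∈ A), ?_⟩
  rintro ⟨k, _ | _⟩ hl
  · simp only [litSat, decide_eq_false_iff_not]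
    intro htrue
    simpa using hA htrue hl rfl
  · simpa [litSat] using hl

theorem hard_direction_general (m : ℕ) (Φ : List Clause3)
    (φ : LTL Lit) (hsz : φ.Sz ≤ 2 * m - 1)
    (hsep : Separates m Φ φ) :
    ∃ v : ℕ → Bool, cnfSat v Φ := by
  obtain ⟨hpos, hneg⟩ := hsep
  have hmeet : ∀ α, φ.Sat (constW α) → ∃ p ∈ φ.props, p ∈ α := fun _ hα =>
    LTL.exists_mem_props_of_sat_constW hα hneg
  have hcover : ↑(Finset.range m) ⊆ Prod.fst '' φ.props := by
    intro k hk
    rw [Finset.coe_range] at hk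
    obtain ⟨p, hp, hpk⟩ := hmeet (rho k) (hpos _ (Or.inr ⟨k, hk, rfl⟩))
    rcases hpk with rfl | rfl
    exacts [⟨_, hp, rfl⟩, ⟨_, hp, rfl⟩]
  have hinj : Set.InjOn Prod.fst φ.props := by
    refine Set.injOn_of_subset_image_of_ncard_le φ.props_finite_s2 hcover ?_
    have := φ.two_mul_ncard_props_le_s2
    rw [Set.ncard_coe_finset, Finset.card_range]
    omega
  obtain ⟨v, hv⟩ := exists_litSat_of_injOn_fst hinj
  refine ⟨v, fun c hc => ?_⟩
  obtain ⟨p, hp, hpc⟩ := hmeet (clauseSet c) (hpos _ (Or.inl ⟨c, hc, rfl⟩))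
  have hsat := hv p hp
  rcases hpc with rfl | rfl | rfl
  exacts [Or.inl hsat, Or.inr (Or.inl hsat), Or.inr (Or.inr hsat)]

/-- if some LTL formula of size at most `2m - 1` separates `𝒫` and `𝒩`,
then `Φ` is satisfiable. -/
theorem hard_direction (m : ℕ) (hm : 0 < m) (Φ : List Clause3) (hvars : cnfVars m Φ)
    (φ : LTL Lit) (hrange : propsInRange m φ) (hsz : φ.Sz ≤ 2 * m - 1)
    (hsep : Separates m Φ φ) :
    ∃ v : ℕ → Bool, cnfSat v Φ :=
  hard_direction_general m Φ φ hsz hsep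

end Temporal
end

section
/- If a temporal-free LTL formula φ separates 𝒫 and 𝒩, then for every 1 ≤ k ≤ m some proposition of {x_k, x̄_k} occurs in φ, i.e., {x_k, x̄_k} ∩ Prop(φ) ≠ ∅; consequently |Prop(φ)| ≥ m. -/
namespace Temporal

variable {P : Type}

lemma props_atom (p : P) : (LTL.atom p).props = {p} := by
  ext q; simp [LTL.props, LTL.SubF]

lemma props_lnot (φ : LTL P) : (LTL.lnot φ).props = φ.props := by
  ext q; simp [LTL.props, LTL.SubF]

lemma props_land (φ ψ : LTL P) : (LTL.land φ ψ).props = φ.props ∪ ψ.props := by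
  ext q; simp [LTL.props, LTL.SubF]

lemma props_lor (φ ψ : LTL P) : (LTL.lor φ ψ).props = φ.props ∪ ψ.props := by
  ext q; simp [LTL.props, LTL.SubF]

lemma props_limp (φ ψ : LTL P) : (LTL.limp φ ψ).props = φ.props ∪ ψ.props := by
  ext q; simp [LTL.props, LTL.SubF]

lemma props_liff (φ ψ : LTL P) : (LTL.liff φ ψ).props = φ.props ∪ ψ.props := by
  ext q; simp [LTL.props, LTL.SubF]

lemma props_finite_tf {φ : LTL P} (h : φ.TemporalFree) : φ.props.Finite := by
  induction h with
  | atom p => rw [props_atom]; exact Set.finite_singleton p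
  | lnot _ ih => rw [props_lnot]; exact ih
  | land _ _ ih1 ih2 => rw [props_land]; exact ih1.union ih2
  | lor _ _ ih1 ih2 => rw [props_lor]; exact ih1.union ih2
  | limp _ _ ih1 ih2 => rw [props_limp]; exact ih1.union ih2
  | liff _ _ ih1 ih2 => rw [props_liff]; exact ih1.union ih2

lemma sat_agree_tf {φ : LTL P} (h : φ.TemporalFree) (α β : Set P)
    (hag : ∀ p ∈ φ.props, (p ∈ α ↔ p ∈ β)) :
    φ.Sat (constW α) ↔ φ.Sat (constW β) := by
  induction h with
  | atom p =>
      have := hag p (by rw [props_atom]; rfl)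
      simpa [LTL.Sat, constW] using this
  | lnot _ ih =>
      have := ih (by intro p hp; exact hag p (by rw [props_lnot]; exact hp))
      simp [LTL.Sat, this]
  | land _ _ ih1 ih2 =>
      have h1 := ih1 (fun p hp => hag p (by rw [props_land]; exact Or.inl hp))
      have h2 := ih2 (fun p hp => hag p (by rw [props_land]; exact Or.inr hp))
      simp [LTL.Sat, h1, h2]
  | lor _ _ ih1 ih2 =>
      have h1 := ih1 (fun p hp => hag p (by rw [props_lor]; exact Or.inl hp))
      have h2 := ih2 (fun p hp => hag p (by rw [props_lor]; exact Or.inr hp))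
      simp [LTL.Sat, h1, h2]
  | limp _ _ ih1 ih2 =>
      have h1 := ih1 (fun p hp => hag p (by rw [props_limp]; exact Or.inl hp))
      have h2 := ih2 (fun p hp => hag p (by rw [props_limp]; exact Or.inr hp))
      simp [LTL.Sat, h1, h2]
  | liff _ _ ih1 ih2 =>
      have h1 := ih1 (fun p hp => hag p (by rw [props_liff]; exact Or.inl hp))
      have h2 := ih2 (fun p hp => hag p (by rw [props_liff]; exact Or.inr hp))
      simp [LTL.Sat, h1, h2]

/-- a temporal-free formula separating `𝒫` and `𝒩` contains, for every
`k < m`, a proposition of `{x_k, x̄_k}`; consequently `|Prop(φ)| ≥ m`. -/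
theorem separating_formula_uses_all_pairs (m : ℕ) (Φ : List Clause3)
    (hvars : cnfVars m Φ) (φ : LTL Lit) (htf : φ.TemporalFree)
    (hsep : Separates m Φ φ) :
    (∀ k < m, (φ.props ∩ rho k).Nonempty) ∧ m ≤ φ.props.ncard := by
  have key : ∀ k < m, (φ.props ∩ rho k).Nonempty := by
    intro k hk
    by_contra hne
    rw [Set.not_nonempty_iff_eq_empty] at hne
    have hpos : φ.Sat (constW (rho k)) :=
      hsep.1 _ (Or.inr ⟨k, hk, rfl⟩)
    have hag : ∀ p ∈ φ.props, (p ∈ rho k ↔ p ∈ (∅ : Set Lit)) := by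
      intro p hp
      constructor
      · intro hr
        exact absurd (Set.mem_inter hp hr) (by rw [hne]; exact id)
      · intro h; exact h.elim
    have := (sat_agree_tf htf (rho k) ∅ hag).mp hpos
    exact hsep.2 this
  refine ⟨key, ?_⟩
  -- choose a witness in each pair
  have hfin : φ.props.Finite := props_finite_tf htf
  choose f hf using fun k (hk : k ∈ Set.Iio m) => key k hk
  have hmaps : ∀ k (hk : k ∈ Set.Iio m), f k hk ∈ φ.props := fun k hk => (hf k hk).1
  have hfst : ∀ k (hk : k ∈ Set.Iio m), (f k hk).1 = k := by
    intro k hk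
    have h := (hf k hk).2
    simp only [rho, Set.mem_insert_iff, Set.mem_singleton_iff] at h
    rcases h with h | h <;> rw [h]
  have hinj : Set.InjOn (fun k => if hk : k ∈ Set.Iio m then f k hk else (0, true))
      (Set.Iio m) := by
    intro a ha b hb hab
    simp only [dif_pos ha, dif_pos hb] at hab
    have := hfst a ha
    rw [hab, hfst b hb] at this
    exact this.symm
  have hle : (Set.Iio m).ncard ≤ φ.props.ncard := by
    apply Set.ncard_le_ncard_of_injOn _ _ hinj hfin
    intro k hk
    simp only [dif_pos hk]
    exact hmaps k hk
  have : (Set.Iio m).ncard = m := by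
    rw [← Finset.coe_range, Set.ncard_coe_finset, Finset.card_range]
  omega

end Temporal
end
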